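/- Let p ≥ 2 be a real number and u ≥ 1 a natural number. Let B be the space of u-tuples of complex numbers (z_0, …, z_{u−1}), regarded as a real normed space with norm ‖z‖ = (∑_{j<u} |z_j|^p)^{1/p}. Define T : B → B by (T z)_j = e^{iπ/2^j} · z_j for j = 0, …, u−1, and let x = u^{−1/p} · (1, 1, …, 1). Then: (a) T is a linear isometry of B; (b) ‖x‖ = 1; and (c) for every j with 0 ≤ j < u, ‖A_{2^{j+1}} x − A_{2^j} x‖ ≥ 1/(2 u^{1/p}). In particular, the sequence (A_n x) admits a (1/(2u^{1/p}))-fluctuation in each of the intervals [1,2], [2,4], …, [2^{u−1}, 2^u], hence u-many such fluctuations in all. -/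

import Mathlib

/-! Component `j` of `T` is multiplication by `λ = e^{iπ/2^j}`, so component `j` of
`A_{2^{j+1}} x - A_{2^j} x` is `u^{-1/p}` times the difference of the averages of the powers of
`λ` over `2^{j+1}` and `2^j` steps. Since `λ^{2^j} = -1`, the first average vanishes and the
second equals `-2 / (2^j (λ - 1))`; as `|λ - 1| ≤ π / 2^j`, this has modulus at least
`2/π ≥ 1/2`. -/

open Finset

/-- The operator `T = (T_π, T_{π/2}, …, T_{π/2^{u-1}})`: component `j` is multiplication by
`e^{iπ/2^j}`. -/
noncomputable def rotOp (u : ℕ) (z : Fin u → ℂ) : Fin u → ℂ :=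
  fun j => Complex.exp ((Real.pi : ℂ) * Complex.I / 2 ^ (j : ℕ)) * z j

/-- The ergodic averages `A n z = (1/n) ∑_{i<n} Tⁱ z` for the operator `rotOp u`. -/
noncomputable def rotOpAvg (u n : ℕ) (z : Fin u → ℂ) : Fin u → ℂ :=
  (n : ℝ)⁻¹ • ∑ i ∈ Finset.range n, (rotOp u)^[i] z

/-- The `ℓ^p` norm on `u`-tuples of complex numbers, viewed as a real normed space. -/
noncomputable def lpNormC (p : ℝ) (u : ℕ) (z : Fin u → ℂ) : ℝ :=
  (∑ j : Fin u, ‖z j‖ ^ p) ^ (1 / p)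

/-- The point `x = u^{-1/p}·(1, 1, …, 1)`. -/
noncomputable def onesVec (p : ℝ) (u : ℕ) : Fin u → ℂ :=
  fun _ => (((u : ℝ) ^ (-(1 / p)) : ℝ) : ℂ)

noncomputable def powAvg (a : ℂ) (n : ℕ) : ℂ :=
  (n : ℝ)⁻¹ • ∑ i ∈ range n, a ^ i

theorem geom_sum_two_mul_of_pow_eq_neg_one {R : Type*} [CommRing R] {a : R} {m : ℕ}
    (h : a ^ m = -1) : ∑ i ∈ range (2 * m), a ^ i = 0 := by
  rw [two_mul, sum_range_add]
  simp only [pow_add, ← mul_sum, h]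
  ring

theorem powAvg_two_mul_sub_powAvg {a : ℂ} {m : ℕ} (hm : 0 < m) (ha : a ≠ 1) (h : a ^ m = -1) :
    powAvg a (2 * m) - powAvg a m = 2 / (m * (a - 1)) := by
  have hsum : ∑ i ∈ range m, a ^ i = -2 / (a - 1) := by
    rw [geom_sum_eq ha, h]; ring
  rw [powAvg, powAvg, geom_sum_two_mul_of_pow_eq_neg_one h, hsum, Complex.real_smul,
    Complex.real_smul]
  have hmC : (m : ℂ) ≠ 0 := by exact_mod_cast hm.ne'
  have ha1 : a - 1 ≠ 0 := sub_ne_zero.mpr ha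
  push_cast
  field_simp
  ring

theorem two_div_pi_le_norm_powAvg_sub {m : ℕ} (hm : 0 < m) :
    2 / Real.pi ≤
      ‖powAvg (Complex.exp (Real.pi * Complex.I / m)) (2 * m) -
        powAvg (Complex.exp (Real.pi * Complex.I / m)) m‖ := by
  have hm' : (0 : ℝ) < m := by exact_mod_cast hm
  have hmC : (m : ℂ) ≠ 0 := by exact_mod_cast hm.ne'
  have ha : Complex.exp (Real.pi * Complex.I / m) =
      Complex.exp (Complex.I * ((Real.pi / m : ℝ) : ℂ)) := by
    congr 1; push_cast; ring
  have hpow : Complex.exp (Real.pi * Complex.I / m) ^ m = -1 := by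
    rw [← Complex.exp_nat_mul, ← Complex.exp_pi_mul_I]
    congr 1
    field_simp
  set a := Complex.exp (Real.pi * Complex.I / m)
  have ha1 : a ≠ 1 := by
    intro h; rw [h, one_pow] at hpow; norm_num at hpow
  have hdist : ‖a - 1‖ ≤ Real.pi / m := by
    simpa [ha, abs_of_pos Real.pi_pos, abs_of_pos hm'] using
      Real.norm_exp_I_mul_ofReal_sub_one_le (x := Real.pi / m)
  have hpos : 0 < ‖a - 1‖ := norm_pos_iff.mpr (sub_ne_zero.mpr ha1)
  rw [powAvg_two_mul_sub_powAvg hm ha1 hpow, norm_div, norm_mul, Complex.norm_natCast,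
    Complex.norm_two]
  gcongr
  calc (m : ℝ) * ‖a - 1‖ ≤ m * (Real.pi / m) := by gcongr
    _ = Real.pi := by field_simp

theorem rotOp_smul_add (u : ℕ) (c : ℝ) (z w : Fin u → ℂ) :
    rotOp u (c • z + w) = c • rotOp u z + rotOp u w := by
  funext j
  simp only [rotOp, Pi.add_apply, Pi.smul_apply, Complex.real_smul]
  ring

theorem norm_exp_pi_mul_I_div (j : ℕ) : ‖Complex.exp (Real.pi * Complex.I / 2 ^ j)‖ = 1 := by
  rw [show (Real.pi : ℂ) * Complex.I / 2 ^ j = ((Real.pi / 2 ^ j : ℝ) : ℂ) * Complex.I by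
    push_cast; ring, Complex.norm_exp_ofReal_mul_I]

theorem lpNormC_rotOp (p : ℝ) (u : ℕ) (z : Fin u → ℂ) :
    lpNormC p u (rotOp u z) = lpNormC p u z := by
  simp only [lpNormC, rotOp, norm_mul, norm_exp_pi_mul_I_div, one_mul]

theorem rotOpAvg_apply (u n : ℕ) (z : Fin u → ℂ) (j : Fin u) :
    rotOpAvg u n z j = powAvg (Complex.exp (Real.pi * Complex.I / 2 ^ (j : ℕ))) n * z j := by
  have hiter : ∀ i, (rotOp u)^[i] z j = Complex.exp (Real.pi * Complex.I / 2 ^ (j : ℕ)) ^ i * z j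
  · intro i
    induction i with
    | zero => simp
    | succ i ih => rw [Function.iterate_succ_apply', rotOp, ih, pow_succ]; ring
  simp only [rotOpAvg, powAvg, Pi.smul_apply, Finset.sum_apply, hiter, ← sum_mul, smul_mul_assoc]

theorem norm_apply_le_lpNormC {p : ℝ} (hp : 0 < p) {u : ℕ} (z : Fin u → ℂ) (j : Fin u) :
    ‖z j‖ ≤ lpNormC p u z := by
  calc ‖z j‖ = (‖z j‖ ^ p) ^ (1 / p) := by
        rw [← Real.rpow_mul (norm_nonneg _), mul_one_div_cancel hp.ne', Real.rpow_one]
    _ ≤ lpNormC p u z :=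
        Real.rpow_le_rpow (by positivity)
          (single_le_sum (f := fun i => ‖z i‖ ^ p) (fun i _ => by positivity) (mem_univ j))
          (by positivity)

theorem lpNormC_onesVec {p : ℝ} (hp : p ≠ 0) {u : ℕ} (hu : 1 ≤ u) :
    lpNormC p u (onesVec p u) = 1 := by
  have hu0 : (0 : ℝ) < u := by exact_mod_cast hu
  simp only [lpNormC, onesVec, Complex.norm_real, Real.norm_eq_abs,
    abs_of_pos (Real.rpow_pos_of_pos hu0 _), sum_const, card_univ, Fintype.card_fin, nsmul_eq_mul]
  rw [← Real.rpow_mul hu0.le, neg_mul, one_div_mul_cancel hp, Real.rpow_neg_one,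
    mul_inv_cancel₀ hu0.ne', Real.one_rpow]

/-- Lower bound construction: on `ℓ^p_u(ℂ)` (as a real normed space), the operator `rotOp u` is
a linear isometry, `‖x‖ = 1` for `x = u^{-1/p}·(1,…,1)`, and for each `j < u`,
`‖A_{2^{j+1}} x − A_{2^j} x‖ ≥ 1/(2 u^{1/p})`; that is, `(A_n x)` has a `1/(2u^{1/p})`-fluctuation
in each interval `[2^j, 2^{j+1}]`, `j = 0, …, u-1`, hence `u`-many such fluctuations in all. -/
theorem stmt17 (p : ℝ) (hp : 2 ≤ p) (u : ℕ) (hu : 1 ≤ u) :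
    (∀ (c : ℝ) (z w : Fin u → ℂ), rotOp u (c • z + w) = c • rotOp u z + rotOp u w) ∧
    (∀ z : Fin u → ℂ, lpNormC p u (rotOp u z) = lpNormC p u z) ∧
    lpNormC p u (onesVec p u) = 1 ∧
    (∀ j : ℕ, j < u →
      1 / (2 * (u : ℝ) ^ (1 / p)) ≤
        lpNormC p u (rotOpAvg u (2 ^ (j + 1)) (onesVec p u) - rotOpAvg u (2 ^ j) (onesVec p u))) := by
  have hp0 : 0 < p := by linarith
  refine ⟨rotOp_smul_add u, lpNormC_rotOp p u, lpNormC_onesVec hp0.ne' hu, fun j hj => ?_⟩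
  have hu0 : (0 : ℝ) < u := by exact_mod_cast hu
  have hc : 0 < (u : ℝ) ^ (-(1 / p)) := Real.rpow_pos_of_pos hu0 _
  have hdiff := two_div_pi_le_norm_powAvg_sub (pow_pos two_pos j)
  push_cast at hdiff
  calc 1 / (2 * (u : ℝ) ^ (1 / p)) = 1 / 2 * (u : ℝ) ^ (-(1 / p)) := by
        rw [Real.rpow_neg hu0.le]; ring
    _ ≤ 2 / Real.pi * (u : ℝ) ^ (-(1 / p)) := by
        gcongr ?_ * _
        rw [le_div_iff₀ Real.pi_pos]
        linarith [Real.pi_le_four]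
    _ ≤ ‖(rotOpAvg u (2 ^ (j + 1)) (onesVec p u) - rotOpAvg u (2 ^ j) (onesVec p u)) ⟨j, hj⟩‖ := by
        rw [Pi.sub_apply, rotOpAvg_apply, rotOpAvg_apply, ← sub_mul, norm_mul, onesVec,
          Complex.norm_real, Real.norm_of_nonneg hc.le, pow_succ']
        gcongr
    _ ≤ _ := norm_apply_le_lpNormC hp0 _ _
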